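/- The self-normalized VS(A) estimator θ̌_l = [Σ_{i=1}^{B'} (1/p_{y_i}) Σ_{u∈U_{y_i}} 1[l ∈ L(u)]/d_u^{(b)}] / [Σ_{i=1}^{B'} (1/p_{y_i}) Σ_{u∈U_{y_i}} 1/d_u^{(b)}] is an asymptotically unbiased estimator of θ_l: almost surely, θ̌_l converges to θ_l as B' → ∞. -/

import Mathlib

/-! Each sample `y_i` contributes `w_h(y_i) = p_{y_i}⁻¹ ∑_{u ∈ U_{y_i}} h(u) / d_u`, whose mean
`∑_v p_v w_h(v)` equals `∑_u h(u)` by double counting the edges of `G_b`. Taking for `h` the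
indicator of the label `l` and the constant `1`, the strong law of large numbers makes the
averages of the numerator and of the denominator converge almost surely to `n θ_l` and `n`. -/

open MeasureTheory ProbabilityTheory Filter Topology Finset

section StrongLaw

variable {Ω V : Type*} [MeasurableSpace Ω] [MeasurableSpace V] [MeasurableSingletonClass V]
  {μ : Measure Ω}

lemma identDistrib_of_measure_preimage_singleton_eq [Countable V] {X Y : Ω → V}
    (hX : Measurable X) (hY : Measurable Y) (h : ∀ v, μ (X ⁻¹' {v}) = μ (Y ⁻¹' {v})) :
    IdentDistrib X Y μ μ :=
  ⟨hX.aemeasurable, hY.aemeasurable, Measure.ext_of_singleton fun v => by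
    rw [Measure.map_apply hX (.singleton v), Measure.map_apply hY (.singleton v), h]⟩

lemma integral_comp_eq_sum_measureReal [Fintype V] [IsFiniteMeasure μ] {X : Ω → V}
    (hX : Measurable X) (F : V → ℝ) :
    ∫ ω, F (X ω) ∂μ = ∑ v, μ.real (X ⁻¹' {v}) * F v := by
  rw [← integral_map hX.aemeasurable (measurable_of_countable F).aestronglyMeasurable,
    integral_fintype .of_finite]
  simp only [measureReal_def, Measure.map_apply hX (.singleton _), smul_eq_mul]

theorem tendsto_average_comp_of_pairwise_indepFun [Finite V] [IsFiniteMeasure μ]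
    {y : ℕ → Ω → V} (hindep : Pairwise fun i j => IndepFun (y i) (y j) μ)
    (hident : ∀ i, IdentDistrib (y i) (y 0) μ μ) (F : V → ℝ) :
    ∀ᵐ ω ∂μ, Tendsto (fun B : ℕ => (∑ i ∈ range B, F (y i ω)) / B) atTop
      (𝓝 (∫ ω, F (y 0 ω) ∂μ)) := by
  have hF : Measurable F := measurable_of_countable F
  have hint : Integrable (fun ω => F (y 0 ω)) μ :=
    (Integrable.of_finite (μ := μ.map (y 0))).comp_aemeasurable (hident 0).aemeasurable_fst
  exact strong_law_ae_real (fun i ω => F (y i ω)) hint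
    (fun i j hij => (hindep hij).comp hF hF) fun i => (hident i).comp hF

end StrongLaw

section Estimator

variable {U V : Type*} [Fintype U] (Adj : U → V → Prop) [∀ u, DecidablePred (Adj u)]

lemma sum_sum_filter_adj_div_degree [Fintype V] (degb : U → ℕ)
    (hdegb : ∀ u, degb u = #(univ.filter (Adj u))) (hdeg : ∀ u, degb u ≠ 0) (h : U → ℝ) :
    ∑ v, ∑ u ∈ univ.filter (Adj · v), h u / degb u = ∑ u, h u := by
  rw [Finset.sum_comm' (t' := univ) (s' := fun u => univ.filter (Adj u)) (by simp)]
  refine Finset.sum_congr rfl fun u _ => ?_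
  rw [sum_const, ← hdegb u, nsmul_eq_mul]
  field_simp [hdeg u]

noncomputable def inverseProbWeightedSum (degb : U → ℕ) (p : V → ℝ) (h : U → ℝ) (v : V) : ℝ :=
  1 / p v * ∑ u ∈ univ.filter (Adj · v), h u / degb u

lemma sum_mul_inverseProbWeightedSum [Fintype V] (degb : U → ℕ)
    (hdegb : ∀ u, degb u = #(univ.filter (Adj u))) (hdeg : ∀ u, degb u ≠ 0)
    {p : V → ℝ} (hp : ∀ v, p v ≠ 0) (h : U → ℝ) :
    ∑ v, p v * inverseProbWeightedSum Adj degb p h v = ∑ u, h u := by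
  simp only [inverseProbWeightedSum, ← mul_assoc, mul_one_div_cancel (hp _), one_mul]
  exact sum_sum_filter_adj_div_degree Adj degb hdegb hdeg h

end Estimator

lemma tendsto_sum_div_sum_of_tendsto_average {f g : ℕ → ℝ} {a b : ℝ}
    (hf : Tendsto (fun B : ℕ => (∑ i ∈ range B, f i) / B) atTop (𝓝 a))
    (hg : Tendsto (fun B : ℕ => (∑ i ∈ range B, g i) / B) atTop (𝓝 b)) (hb : b ≠ 0) :
    Tendsto (fun B => (∑ i ∈ range B, f i) / ∑ i ∈ range B, g i) atTop (𝓝 (a / b)) := by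
  refine (hf.div hg hb).congr' ?_
  filter_upwards [eventually_ne_atTop 0] with B hB
  exact div_div_div_cancel_right₀ (Nat.cast_ne_zero.mpr hB) _ _

theorem vsA_self_normalized_estimator_consistent {U V Λ Ω : Type*} [Fintype U] [Fintype V]
    [MeasurableSpace Ω] [MeasurableSpace V] [MeasurableSingletonClass V]
    (μ : Measure Ω) [IsProbabilityMeasure μ]
    (Adj : U → V → Prop)
    [∀ v, DecidablePred (fun u : U => Adj u v)] [∀ u, DecidablePred (fun v : V => Adj u v)]
    (degb : U → ℕ)
    (hdegb : ∀ u : U, degb u = (Finset.univ.filter (fun v : V => Adj u v)).card)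
    (hdeg : ∀ u : U, 0 < degb u)
    (n : ℕ) (hn : n = Fintype.card U) (hn1 : 1 ≤ n)
    (L : U → Set Λ) (l : Λ) [DecidablePred fun u : U => l ∈ L u]
    (θ : ℝ) (hθ : θ = (1 / (n : ℝ)) * ∑ u : U, if l ∈ L u then (1 : ℝ) else 0)
    (p : V → ℝ) (hp : ∀ v, 0 < p v) (hpsum : ∑ v : V, p v = 1)
    (y : ℕ → Ω → V) (hmeas : ∀ i, Measurable (y i))
    (hindep : ProbabilityTheory.iIndepFun y μ)
    (hmarg : ∀ (i : ℕ) (v : V), μ {ω | y i ω = v} = ENNReal.ofReal (p v)) :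
    ∀ᵐ ω ∂μ, Filter.Tendsto (fun B' : ℕ =>
        (∑ i ∈ Finset.range B', (1 / p (y i ω)) *
            ∑ u ∈ Finset.univ.filter (fun u : U => Adj u (y i ω)),
              (if l ∈ L u then (1 : ℝ) else 0) / (degb u : ℝ)) /
        (∑ i ∈ Finset.range B', (1 / p (y i ω)) *
            ∑ u ∈ Finset.univ.filter (fun u : U => Adj u (y i ω)),
              1 / (degb u : ℝ)))
      Filter.atTop (nhds θ) := by
  have hident : ∀ i, IdentDistrib (y i) (y 0) μ μ := fun i =>
    identDistrib_of_measure_preimage_singleton_eq (hmeas i) (hmeas 0) fun v =>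
      (hmarg i v).trans (hmarg 0 v).symm
  have hmean : ∀ F : V → ℝ, ∫ ω, F (y 0 ω) ∂μ = ∑ v, p v * F v := fun F => by
    have hmarg0 : ∀ v, μ (y 0 ⁻¹' {v}) = ENNReal.ofReal (p v) := hmarg 0
    simp only [integral_comp_eq_sum_measureReal (hmeas 0), measureReal_def, hmarg0,
      ENNReal.toReal_ofReal (hp _).le]
  have hdeg' : ∀ u, degb u ≠ 0 := fun u => (hdeg u).ne'
  have hp' : ∀ v, p v ≠ 0 := fun v => (hp v).ne'
  have slln :=
    tendsto_average_comp_of_pairwise_indepFun (fun _ _ hij => hindep.indepFun hij) hident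
  filter_upwards [slln (inverseProbWeightedSum Adj degb p fun u => if l ∈ L u then 1 else 0),
    slln (inverseProbWeightedSum Adj degb p fun _ => 1)] with ω hnum hden
  rw [hmean, sum_mul_inverseProbWeightedSum Adj degb hdegb hdeg' hp'] at hnum hden
  rw [sum_const, card_univ, ← hn, nsmul_one] at hden
  rw [hθ, one_div_mul_eq_div]
  exact tendsto_sum_div_sum_of_tendsto_average hnum hden (by positivity)
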